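/- Potential-based reward shaping preserves optimal policies: for an MDP with discount γ and reward r, adding the shaping reward F(s,a,s') = γΦ(s') − Φ(s) changes the optimal action-value function by the state-dependent constant −Φ(s), i.e., Q'*(s,a) = Q*(s,a) − Φ(s); consequently the set of greedy (optimal) actions at every state is unchanged. -/

import Mathlib

/-!
The optimal action-value function is the unique fixed point of the Bellman optimality operator,
which is a `γ`-contraction in the sup norm because `sup'` is 1-Lipschitz and `p s a` is a
probability vector. Shaping conjugates this operator by the shift `Q ↦ Q - Φ`: the telescoping
term `γ Φ s'` is absorbed by the shifted maximum and `- Φ s` comes out of the average. Hence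
`Q* - Φ` is a fixed point of the shaped operator, and uniqueness gives `Q'* = Q* - Φ`.
-/

open Finset

theorem Finset.abs_sup'_sub_sup'_le {ι α : Type*} [AddCommGroup α] [LinearOrder α]
    [IsOrderedAddMonoid α] {s : Finset ι} (hs : s.Nonempty) {f g : ι → α} {δ : α}
    (h : ∀ i ∈ s, |f i - g i| ≤ δ) : |s.sup' hs f - s.sup' hs g| ≤ δ := by
  rw [abs_sub_le_iff, sub_le_iff_le_add, sub_le_iff_le_add]
  constructor <;> refine sup'_le _ _ fun i hi => ?_
  · exact sub_le_iff_le_add.1 (abs_sub_le_iff.1 (h i hi)).1 |>.trans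
      (add_le_add_right (le_sup' g hi) δ)
  · exact sub_le_iff_le_add.1 (abs_sub_le_iff.1 (h i hi)).2 |>.trans
      (add_le_add_right (le_sup' f hi) δ)

theorem abs_sum_mul_le_of_sum_eq_one {ι : Type*} {s : Finset ι} {w x : ι → ℝ} {δ : ℝ}
    (hw0 : ∀ i ∈ s, 0 ≤ w i) (hw1 : ∑ i ∈ s, w i = 1) (hx : ∀ i ∈ s, |x i| ≤ δ) :
    |∑ i ∈ s, w i * x i| ≤ δ :=
  calc |∑ i ∈ s, w i * x i|
      ≤ ∑ i ∈ s, |w i * x i| := abs_sum_le_sum_abs _ _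
    _ ≤ ∑ i ∈ s, w i * δ := sum_le_sum fun i hi => by
        rw [abs_mul, abs_of_nonneg (hw0 i hi)]
        exact mul_le_mul_of_nonneg_left (hx i hi) (hw0 i hi)
    _ = δ := by rw [← sum_mul, hw1, one_mul]

namespace MDP

def shapedReward {S A : Type*} (r : S → A → S → ℝ) (γ : ℝ) (Φ : S → ℝ) : S → A → S → ℝ :=
  fun s a s' => r s a s' + γ * Φ s' - Φ s

variable {S A : Type*} [Fintype S] [Fintype A] [Nonempty A]

noncomputable def bellmanOptimalityOp (p r : S → A → S → ℝ) (γ : ℝ) (Q : S → A → ℝ) :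
    S → A → ℝ :=
  fun s a => ∑ s', p s a s' * (r s a s' + γ * univ.sup' univ_nonempty (Q s'))

variable {p : S → A → S → ℝ} {γ : ℝ}

theorem bellmanOptimalityOp_shapedReward (hp1 : ∀ s a, ∑ s', p s a s' = 1)
    (r : S → A → S → ℝ) (Φ : S → ℝ) (Q : S → A → ℝ) :
    bellmanOptimalityOp p (shapedReward r γ Φ) γ (fun s a => Q s a - Φ s) =
      fun s a => bellmanOptimalityOp p r γ Q s a - Φ s := by
  funext s a
  have hshift : ∀ s', univ.sup' univ_nonempty (fun a' => Q s' a' - Φ s') =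
      univ.sup' univ_nonempty (Q s') - Φ s' := fun s' => by
    simp only [sub_eq_add_neg, sup'_add]
  simp only [bellmanOptimalityOp, shapedReward, hshift]
  calc ∑ s', p s a s' * (r s a s' + γ * Φ s' - Φ s + γ * (univ.sup' univ_nonempty (Q s') - Φ s'))
      = ∑ s', (p s a s' * (r s a s' + γ * univ.sup' univ_nonempty (Q s')) - p s a s' * Φ s) :=
        sum_congr rfl fun s' _ => by ring
    _ = _ := by rw [sum_sub_distrib, ← sum_mul, hp1 s a, one_mul]

theorem dist_bellmanOptimalityOp_le (hp0 : ∀ s a s', 0 ≤ p s a s')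
    (hp1 : ∀ s a, ∑ s', p s a s' = 1) (hγ0 : 0 ≤ γ) (r : S → A → S → ℝ) (Q₁ Q₂ : S → A → ℝ) :
    dist (bellmanOptimalityOp p r γ Q₁) (bellmanOptimalityOp p r γ Q₂) ≤ γ * dist Q₁ Q₂ := by
  refine (dist_pi_le_iff (by positivity)).2 fun s => (dist_pi_le_iff (by positivity)).2 fun a => ?_
  have hdiff : bellmanOptimalityOp p r γ Q₁ s a - bellmanOptimalityOp p r γ Q₂ s a =
      γ * ∑ s', p s a s' *
        (univ.sup' univ_nonempty (Q₁ s') - univ.sup' univ_nonempty (Q₂ s')) := by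
    simp only [bellmanOptimalityOp, mul_sum, ← sum_sub_distrib]
    exact sum_congr rfl fun s' _ => by ring
  have hsup : ∀ s', |univ.sup' univ_nonempty (Q₁ s') - univ.sup' univ_nonempty (Q₂ s')| ≤
      dist Q₁ Q₂ := fun s' =>
    abs_sup'_sub_sup'_le _ fun a' _ =>
      (dist_le_pi_dist (Q₁ s') (Q₂ s') a').trans (dist_le_pi_dist Q₁ Q₂ s')
  rw [Real.dist_eq, hdiff, abs_mul, abs_of_nonneg hγ0]
  exact mul_le_mul_of_nonneg_left
    (abs_sum_mul_le_of_sum_eq_one (fun s' _ => hp0 s a s') (hp1 s a) fun s' _ => hsup s') hγ0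

theorem contractingWith_bellmanOptimalityOp (hp0 : ∀ s a s', 0 ≤ p s a s')
    (hp1 : ∀ s a, ∑ s', p s a s' = 1) (hγ0 : 0 ≤ γ) (hγ1 : γ < 1) (r : S → A → S → ℝ) :
    ContractingWith ⟨γ, hγ0⟩ (bellmanOptimalityOp p r γ) :=
  ⟨hγ1, LipschitzWith.of_dist_le_mul (dist_bellmanOptimalityOp_le hp0 hp1 hγ0 r)⟩

end MDP

open MDP in
theorem reward_shaping_preserves_optimal_policy_general
    {S A : Type*} [Fintype S] [Fintype A] [Nonempty A]
    (p : S → A → S → ℝ)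
    (hp0 : ∀ s a s', 0 ≤ p s a s')
    (hp1 : ∀ s a, ∑ s', p s a s' = 1)
    (r : S → A → S → ℝ) (γ : ℝ) (hγ0 : 0 ≤ γ) (hγ1 : γ < 1)
    (Φ : S → ℝ)
    (Q Q' : S → A → ℝ)
    (hQ : ∀ s a, Q s a =
      ∑ s', p s a s' * (r s a s' + γ * (univ.sup' univ_nonempty fun a' => Q s' a')))
    (hQ' : ∀ s a, Q' s a =
      ∑ s', p s a s' *
        ((r s a s' + γ * Φ s' - Φ s) + γ * (univ.sup' univ_nonempty fun a' => Q' s' a'))) :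
    (∀ s a, Q' s a = Q s a - Φ s) ∧
    (∀ s : S, {a : A | ∀ b, Q' s b ≤ Q' s a} = {a : A | ∀ b, Q s b ≤ Q s a}) := by
  have hfixQ : Function.IsFixedPt (bellmanOptimalityOp p r γ) Q :=
    funext fun s => funext fun a => (hQ s a).symm
  have hfixQ' : Function.IsFixedPt (bellmanOptimalityOp p (shapedReward r γ Φ) γ) Q' :=
    funext fun s => funext fun a => (hQ' s a).symm
  have hfixShift : Function.IsFixedPt (bellmanOptimalityOp p (shapedReward r γ Φ) γ)
      (fun s a => Q s a - Φ s) := by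
    rw [Function.IsFixedPt, bellmanOptimalityOp_shapedReward hp1, hfixQ.eq]
  have hshift : ∀ s a, Q' s a = Q s a - Φ s := fun s a =>
    congrFun₂ ((contractingWith_bellmanOptimalityOp hp0 hp1 hγ0 hγ1 _).fixedPoint_unique'
      hfixQ' hfixShift) s a
  refine ⟨hshift, fun s => ?_⟩
  simp only [hshift, sub_le_sub_iff_right]

/-- Potential-based reward shaping preserves optimal policies:
the shaped optimal action-value function satisfies Q'*(s,a) = Q*(s,a) − Φ(s),
hence the greedy action sets are unchanged. -/
theorem reward_shaping_preserves_optimal_policy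
    {S A : Type*} [Fintype S] [Fintype A] [Nonempty S] [Nonempty A]
    (p : S → A → S → ℝ)
    (hp0 : ∀ s a s', 0 ≤ p s a s')
    (hp1 : ∀ s a, ∑ s', p s a s' = 1)
    (r : S → A → S → ℝ) (γ : ℝ) (hγ0 : 0 ≤ γ) (hγ1 : γ < 1)
    (Φ : S → ℝ)
    (Q Q' : S → A → ℝ)
    (hQ : ∀ s a, Q s a =
      ∑ s', p s a s' * (r s a s' + γ * (univ.sup' univ_nonempty fun a' => Q s' a')))
    (hQ' : ∀ s a, Q' s a =
      ∑ s', p s a s' *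
        ((r s a s' + γ * Φ s' - Φ s) + γ * (univ.sup' univ_nonempty fun a' => Q' s' a'))) :
    (∀ s a, Q' s a = Q s a - Φ s) ∧
    (∀ s : S, {a : A | ∀ b, Q' s b ≤ Q' s a} = {a : A | ∀ b, Q s b ≤ Q s a}) :=
  reward_shaping_preserves_optimal_policy_general p hp0 hp1 r γ hγ0 hγ1 Φ Q Q' hQ hQ'
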